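/- Let π(f₁), π(f₂|f₁) be prior densities and p₁(y|f₁), p₂(y|f₁,f₂) be two likelihoods (for the same data y). Define the modular posterior p_M(f₁,f₂|y) = m(f₁)·m(f₂|f₁), where m(f₁) = π(f₁)p₁(y|f₁)/∫π(f₁)p₁(y|f₁)df₁ and m(f₂|f₁) = π(f₂|f₁)p₂(y|f₁,f₂)/∫π(f₂|f₁)p₂(y|f₁,f₂)df₂. Then p_M(f₁,f₂|y) = π_d(f₁,f₂)·p₂(y|f₁,f₂)/p₂(y), where π_d(f₁,f₂) = π(f₁)π(f₂|f₁)·p₁(f₁|y)/p₂(f₁|y), p₁(f₁|y) is the posterior of f₁ under model p₁, p₂(f₁|y) is the marginal posterior of f₁ under model p₂, and p₂(y) = ∬π(f₁)π(f₂|f₁)p₂(y|f₁,f₂)df₂df₁. That is, the modular posterior equals the Bayesian posterior under likelihood p₂ with the data-dependent prior π_d. -/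

import Mathlib

open MeasureTheory

/-! Since `p₂(f₁|y)·p₂(y) = π(f₁)·∫ π(f₂|f₁) p₂(y|f₁,f₂) df₂`, in the
data-dependent prior the factor `π(f₁)` cancels, the evidence `p₂(y)` cancels against the
division by `p₂(y)`, and what remains is `p₁(f₁|y)·m(f₂|f₁)`. -/

theorem integral_pos_of_forall_pos {α : Type*} [MeasurableSpace α] {μ : Measure α} [NeZero μ]
    {f : α → ℝ} (hf : ∀ x, 0 < f x) (hfi : Integrable f μ) : 0 < ∫ x, f x ∂μ := by
  rw [integral_pos_iff_support_of_nonneg (fun x => (hf x).le) hfi,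
    Function.support_eq_univ fun x => (hf x).ne']
  exact Measure.measure_univ_pos.2 (NeZero.ne μ)

theorem mul_div_eq_dataDependent_posterior {K : Type*} [Field K] (a m c d I C : K) (ha : a ≠ 0)
    (hC : C ≠ 0) : m * (c * d / I) = a * c * (m / (a * I / C)) * d / C := by
  field_simp

theorem modular_posterior_eq_dataDependent_bayes_general
    (pi1 : ℝ → ℝ) (pi2 : ℝ → ℝ → ℝ) (p1 : ℝ → ℝ) (p2 : ℝ → ℝ → ℝ)
    (hpi1 : ∀ f₁, 0 < pi1 f₁) (hpi2 : ∀ f₁ f₂, 0 < pi2 f₁ f₂)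
    (hp2 : ∀ f₁ f₂, 0 < p2 f₁ f₂)
    (hint2 : ∀ f₁, Integrable (fun f₂ => pi2 f₁ f₂ * p2 f₁ f₂))
    (hint12 : Integrable (fun f₁ => pi1 f₁ * ∫ f₂, pi2 f₁ f₂ * p2 f₁ f₂)) :
    ∀ f₁ f₂,
      -- modular posterior m(f₁) · m(f₂|f₁)
      (pi1 f₁ * p1 f₁ / (∫ g₁, pi1 g₁ * p1 g₁)) *
        (pi2 f₁ f₂ * p2 f₁ f₂ / (∫ g₂, pi2 f₁ g₂ * p2 f₁ g₂))
      =
      -- data-dependent prior π_d(f₁,f₂) = π(f₁)π(f₂|f₁)·p₁(f₁|y)/p₂(f₁|y) ...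
      (pi1 f₁ * pi2 f₁ f₂ *
        ((pi1 f₁ * p1 f₁ / (∫ g₁, pi1 g₁ * p1 g₁)) /
          ((∫ g₂, pi1 f₁ * pi2 f₁ g₂ * p2 f₁ g₂) /
            (∫ g₁, ∫ g₂, pi1 g₁ * pi2 g₁ g₂ * p2 g₁ g₂))))
      -- ... times likelihood p₂(y|f₁,f₂) divided by p₂(y)
        * p2 f₁ f₂ / (∫ g₁, ∫ g₂, pi1 g₁ * pi2 g₁ g₂ * p2 g₁ g₂) := by
  intro f₁ f₂
  have hfactor : ∀ g₁, ∫ g₂, pi1 g₁ * pi2 g₁ g₂ * p2 g₁ g₂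
      = pi1 g₁ * ∫ g₂, pi2 g₁ g₂ * p2 g₁ g₂ := fun g₁ => by
    simp only [mul_assoc, integral_const_mul]
  have hevidence : (∫ g₁, pi1 g₁ * ∫ g₂, pi2 g₁ g₂ * p2 g₁ g₂) ≠ 0 :=
    (integral_pos_of_forall_pos (fun g₁ => mul_pos (hpi1 g₁)
      (integral_pos_of_forall_pos (fun g₂ => mul_pos (hpi2 g₁ g₂) (hp2 g₁ g₂)) (hint2 g₁)))
      hint12).ne'
  simp only [hfactor]
  exact mul_div_eq_dataDependent_posterior _ _ _ _ _ _ (hpi1 f₁).ne' hevidence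

/-- the modular posterior `m(f₁)·m(f₂|f₁)` equals the Bayesian posterior
under likelihood `p₂` with the data-dependent prior
`π_d(f₁,f₂) = π(f₁)π(f₂|f₁)·p₁(f₁|y)/p₂(f₁|y)`. -/
theorem modular_posterior_eq_dataDependent_bayes
    (pi1 : ℝ → ℝ) (pi2 : ℝ → ℝ → ℝ) (p1 : ℝ → ℝ) (p2 : ℝ → ℝ → ℝ)
    (hpi1 : ∀ f₁, 0 < pi1 f₁) (hpi2 : ∀ f₁ f₂, 0 < pi2 f₁ f₂)
    (hp1 : ∀ f₁, 0 < p1 f₁) (hp2 : ∀ f₁ f₂, 0 < p2 f₁ f₂)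
    (hint1 : Integrable (fun f₁ => pi1 f₁ * p1 f₁))
    (hint2 : ∀ f₁, Integrable (fun f₂ => pi2 f₁ f₂ * p2 f₁ f₂))
    (hint12 : Integrable (fun f₁ => pi1 f₁ * ∫ f₂, pi2 f₁ f₂ * p2 f₁ f₂)) :
    ∀ f₁ f₂,
      -- modular posterior m(f₁) · m(f₂|f₁)
      (pi1 f₁ * p1 f₁ / (∫ g₁, pi1 g₁ * p1 g₁)) *
        (pi2 f₁ f₂ * p2 f₁ f₂ / (∫ g₂, pi2 f₁ g₂ * p2 f₁ g₂))
      =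
      -- data-dependent prior π_d(f₁,f₂) = π(f₁)π(f₂|f₁)·p₁(f₁|y)/p₂(f₁|y) ...
      (pi1 f₁ * pi2 f₁ f₂ *
        ((pi1 f₁ * p1 f₁ / (∫ g₁, pi1 g₁ * p1 g₁)) /
          ((∫ g₂, pi1 f₁ * pi2 f₁ g₂ * p2 f₁ g₂) /
            (∫ g₁, ∫ g₂, pi1 g₁ * pi2 g₁ g₂ * p2 g₁ g₂))))
      -- ... times likelihood p₂(y|f₁,f₂) divided by p₂(y)
        * p2 f₁ f₂ / (∫ g₁, ∫ g₂, pi1 g₁ * pi2 g₁ g₂ * p2 g₁ g₂) :=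
  modular_posterior_eq_dataDependent_bayes_general pi1 pi2 p1 p2 hpi1 hpi2 hp2 hint2 hint12
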